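/- Let (A,B) be a nonempty, bounded, closed and convex pair in a reflexive and strictly convex Banach space X, let S : A ∪ B → A ∪ B be a cyclic relatively nonexpansive mapping, and suppose (p,q) ∈ A₀ × B₀ satisfies S(Pp) = p, S(Pq) = q and ‖p−q‖ = dist(A,B) (i.e., (p,q) is a best proximity pair of the noncyclic mapping S∘P). Then ‖p − Sp‖ = dist(A,B) and ‖q − Sq‖ = dist(A,B), i.e., both p and q are best proximity points of S. -/

import Mathlib

open Set

/-- `setDist A B = inf {‖x - y‖ : x ∈ A, y ∈ B}`. -/
noncomputable def setDist {X : Type*} [NormedAddCommGroup X] (A B : Set X) : ℝ :=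
  sInf ((fun p : X × X => ‖p.1 - p.2‖) '' (A ×ˢ B))

/-- `A₀ = {x ∈ A : ‖x - y‖ = dist(A,B) for some y ∈ B}`. -/
noncomputable def proxA {X : Type*} [NormedAddCommGroup X] (A B : Set X) : Set X :=
  {x ∈ A | ∃ y ∈ B, ‖x - y‖ = setDist A B}

/-- `B₀ = {y ∈ B : ‖x - y‖ = dist(A,B) for some x ∈ A}`. -/
noncomputable def proxB {X : Type*} [NormedAddCommGroup X] (A B : Set X) : Set X :=
  {y ∈ B | ∃ x ∈ A, ‖x - y‖ = setDist A B}

/-!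
Since `S (P p) = p`, relative nonexpansiveness gives
`‖p - S p‖ = ‖S (P p) - S p‖ ≤ ‖P p - p‖ = dist(A, B)`, while `p ∈ A` and `S p ∈ B` give the
reverse inequality; the same argument with the roles of `A` and `B` exchanged applies to `q`.
-/

section

variable {X : Type*} [NormedAddCommGroup X]

theorem setDist_le_norm_sub {A B : Set X} {x y : X} (hx : x ∈ A) (hy : y ∈ B) :
    setDist A B ≤ ‖x - y‖ :=
  csInf_le ⟨0, by rintro _ ⟨_, _, rfl⟩; exact norm_nonneg _⟩ ⟨(x, y), ⟨hx, hy⟩, rfl⟩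

theorem setDist_comm (A B : Set X) : setDist B A = setDist A B := by
  unfold setDist
  congr 1
  ext r
  constructor <;>
    rintro ⟨⟨x, y⟩, ⟨hx, hy⟩, rfl⟩ <;> exact ⟨(y, x), ⟨hy, hx⟩, norm_sub_rev _ _⟩

def IsRelativelyNonexpansive (S : X → X) (A B : Set X) : Prop :=
  ∀ x ∈ A, ∀ y ∈ B, ‖S x - S y‖ ≤ ‖x - y‖

namespace IsRelativelyNonexpansive

variable {S : X → X} {A B : Set X}

theorem symm (hS : IsRelativelyNonexpansive S A B) : IsRelativelyNonexpansive S B A :=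
  fun y hy x hx => by simpa only [norm_sub_rev] using hS x hx y hy

theorem norm_sub_map_eq_setDist (hS : IsRelativelyNonexpansive S A B) (hSA : MapsTo S A B)
    {x y : X} (hx : x ∈ A) (hy : y ∈ B) (hxy : ‖x - y‖ = setDist A B) (hSy : S y = x) :
    ‖x - S x‖ = setDist A B := by
  refine le_antisymm ?_ (setDist_le_norm_sub hx (hSA hx))
  calc ‖x - S x‖ = ‖S x - S y‖ := by rw [hSy, norm_sub_rev]
    _ ≤ ‖x - y‖ := hS x hx y hy
    _ = setDist A B := hxy

end IsRelativelyNonexpansive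

end

/-- Here `u = P p ∈ B₀` and `v = P q ∈ A₀` are the proximal points of `p` and `q`. -/
theorem best_proximity_points_of_noncyclic_bpp_general
    {X : Type*} [NormedAddCommGroup X]
    (A B : Set X)
    (S : X → X) (hSA : MapsTo S A B) (hSB : MapsTo S B A)
    (hS : ∀ x ∈ A, ∀ y ∈ B, ‖S x - S y‖ ≤ ‖x - y‖)
    (p q u v : X) (hp : p ∈ proxA A B) (hq : q ∈ proxB A B)
    (hu : u ∈ proxB A B) (hv : v ∈ proxA A B)
    (hpu : ‖p - u‖ = setDist A B) (hqv : ‖v - q‖ = setDist A B)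
    (hSp : S u = p) (hSq : S v = q) :
    ‖p - S p‖ = setDist A B ∧ ‖q - S q‖ = setDist A B := by
  have hS' : IsRelativelyNonexpansive S A B := hS
  have hqv' : ‖q - v‖ = setDist B A := by rw [norm_sub_rev, hqv, setDist_comm]
  refine ⟨hS'.norm_sub_map_eq_setDist hSA hp.1 hu.1 hpu hSp, ?_⟩
  rw [← setDist_comm]
  exact hS'.symm.norm_sub_map_eq_setDist hSB hq.1 hv.1 hqv' hSq

/-- If `S` is cyclic relatively nonexpansive and `(p, q) ∈ A₀ × B₀` is a best proximity pair
of the noncyclic mapping `S ∘ P` (here `u = P p ∈ B₀` and `v = P q ∈ A₀` denote the proximal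
points of `p` and `q`), then `p` and `q` are best proximity points of `S`. -/
theorem best_proximity_points_of_noncyclic_bpp
    {X : Type*} [NormedAddCommGroup X] [NormedSpace ℝ X] [CompleteSpace X]
    [StrictConvexSpace ℝ X]
    (hrefl : Function.Surjective (NormedSpace.inclusionInDoubleDual ℝ X))
    (A B : Set X) (hA : A.Nonempty) (hB : B.Nonempty)
    (hAbd : Bornology.IsBounded A) (hBbd : Bornology.IsBounded B)
    (hAcl : IsClosed A) (hBcl : IsClosed B)
    (hAconv : Convex ℝ A) (hBconv : Convex ℝ B)
    (S : X → X) (hSA : MapsTo S A B) (hSB : MapsTo S B A)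
    (hS : ∀ x ∈ A, ∀ y ∈ B, ‖S x - S y‖ ≤ ‖x - y‖)
    (p q u v : X) (hp : p ∈ proxA A B) (hq : q ∈ proxB A B)
    (hu : u ∈ proxB A B) (hv : v ∈ proxA A B)
    (hpu : ‖p - u‖ = setDist A B) (hqv : ‖v - q‖ = setDist A B)
    (hSp : S u = p) (hSq : S v = q) (hpq : ‖p - q‖ = setDist A B) :
    ‖p - S p‖ = setDist A B ∧ ‖q - S q‖ = setDist A B :=
  best_proximity_points_of_noncyclic_bpp_general A B S hSA hSB hS p q u v hp hq hu hv hpu hqv hSp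
    hSq
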